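/- arXiv:1711.02576 — 2 statements merged into one kernel-verified Lean document; each statement's English description precedes it below -/
import Mathlib

section
/- Let F be the Frobenius companion matrix of p, let C be a unit sparse companion matrix of p in Hessenberg form with coefficient positions (r_k, c_k) (so that −a_{n−1−k} occupies position (r_k, c_k)), and let M = max{|a_k| : 1 ≤ k ≤ n−1}. If N(C) < N(F), then either (1) for every i ∈ {1, …, n−1} with |a_i| = M the coefficient −a_i lies in the n-th row of C (that is, r_{n−1−i} = n), and ‖C‖_∞ < N(F) ≤ ‖C‖_1; or (2) for every i ∈ {1, …, n−1} with |a_i| = M the coefficient −a_i lies in the first column of C (that is, c_{n−1−i} = 1), and ‖C‖_1 < N(F) ≤ ‖C‖_∞. -/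
noncomputable section

/-- Maximum absolute row sum (the `∞`-norm). -/
def infNorm {n : ℕ} (A : Matrix (Fin n) (Fin n) ℂ) : ℝ :=
  ⨆ i, ∑ j, ‖A i j‖

/-- Maximum absolute column sum (the `1`-norm). -/
def oneNorm {n : ℕ} (A : Matrix (Fin n) (Fin n) ℂ) : ℝ :=
  ⨆ j, ∑ i, ‖A i j‖

/-- `N(A) = min {‖A‖_∞, ‖A‖_1}`. -/
def NN {n : ℕ} (A : Matrix (Fin n) (Fin n) ℂ) : ℝ :=
  min (infNorm A) (oneNorm A)

/-- The monic polynomial `p(x) = x^n + a_{n-1}x^{n-1} + ⋯ + a_1 x + a_0`. -/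
def pPoly (n : ℕ) (a : ℕ → ℂ) : Polynomial ℂ :=
  Polynomial.X ^ n + ∑ k ∈ Finset.range n, Polynomial.C (a k) * Polynomial.X ^ k

/-- Coefficients of the monic reversal polynomial `p♯`:
`asharp n a k` is the coefficient of `x^k` in `p♯`, namely `1/a_0` for `k = 0`
and `a_{n-k}/a_0` for `1 ≤ k ≤ n-1`. -/
def asharp (n : ℕ) (a : ℕ → ℂ) : ℕ → ℂ :=
  fun k => if k = 0 then 1 / a 0 else a (n - k) / a 0

/-- A unit sparse companion matrix of `p` in Hessenberg form, with explicit data: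
`m` (0-based; `m + 1 ≤ n`), and 0-based positions `(r k, c k)` (for `k = 0, …, n-1`)
satisfying `r k - c k = k`, `m ≤ r k ≤ n-1`, `0 ≤ c k ≤ m`; the superdiagonal
entries are `1`, the entry at `(r k, c k)` is `-a_{n-1-k}`, and all other entries
are `0`.  (This is the 0-based translation of the 1-based description.) -/
def IsUnitSparseData (n m : ℕ) (a : ℕ → ℂ) (C : Matrix (Fin n) (Fin n) ℂ)
    (r c : Fin n → Fin n) : Prop :=
  m + 1 ≤ n ∧
  (∀ k : Fin n, (r k : ℕ) = (c k : ℕ) + (k : ℕ)) ∧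
  (∀ k : Fin n, m ≤ (r k : ℕ)) ∧
  (∀ k : Fin n, (c k : ℕ) ≤ m) ∧
  (∀ k : Fin n, C (r k) (c k) = -a (n - 1 - (k : ℕ))) ∧
  (∀ i j : Fin n, (j : ℕ) = (i : ℕ) + 1 → C i j = 1) ∧
  (∀ i j : Fin n, (j : ℕ) ≠ (i : ℕ) + 1 →
    (∀ k : Fin n, ¬(r k = i ∧ c k = j)) → C i j = 0)

/-- A unit sparse companion matrix of `p` in Hessenberg form. -/
def IsUnitSparse (n : ℕ) (a : ℕ → ℂ) (C : Matrix (Fin n) (Fin n) ℂ) : Prop :=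
  ∃ (m : ℕ) (r c : Fin n → Fin n), IsUnitSparseData n m a C r c

/-- A Fiedler companion matrix of `p` in Hessenberg form (with explicit position
data): a unit sparse companion matrix such that for `1 ≤ k ≤ n-1`, if `-a_{k-1}`
occupies position `(i,j)` then `-a_k` occupies position `(i-1,j)` or `(i,j+1)`.
Here the coefficient `-a_{n-1-k}` sits at position index `k`, so the coefficient
`-a_{k-1}` has index `k' = n-k` and `-a_k` has index `n-1-k = k' - 1`. -/
def IsFiedlerData (n m : ℕ) (a : ℕ → ℂ) (C : Matrix (Fin n) (Fin n) ℂ)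
    (r c : Fin n → Fin n) : Prop :=
  IsUnitSparseData n m a C r c ∧
  ∀ k k' : Fin n, (k' : ℕ) = (k : ℕ) + 1 →
    ((r k : ℕ) + 1 = (r k' : ℕ) ∧ c k = c k') ∨
    (r k = r k' ∧ (c k : ℕ) = (c k' : ℕ) + 1)

/-- The Frobenius companion matrix of the monic polynomial with coefficients `a`
(0-based: superdiagonal `1`'s and last row `-a_0, -a_1, …, -a_{n-1}`). -/
def Frob (n : ℕ) (a : ℕ → ℂ) : Matrix (Fin n) (Fin n) ℂ :=
  Matrix.of fun i j =>
    if (j : ℕ) = (i : ℕ) + 1 then 1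
    else if (i : ℕ) = n - 1 then -a (j : ℕ)
    else 0

/-- The Fiedler companion matrix `L_b` (0-based translation): superdiagonal `1`'s,
`(L_b)_{i,b} = -a_{n+b-1-i}` for `b ≤ i ≤ n-2`, and `(L_b)_{n-1,j} = -a_j` for
`0 ≤ j ≤ b`; all other entries `0`. -/
def Lmat (n b : ℕ) (a : ℕ → ℂ) : Matrix (Fin n) (Fin n) ℂ :=
  Matrix.of fun i j =>
    if (j : ℕ) = (i : ℕ) + 1 then 1
    else if (i : ℕ) = n - 1 ∧ (j : ℕ) ≤ b then -a (j : ℕ)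
    else if (j : ℕ) = b ∧ b ≤ (i : ℕ) ∧ (i : ℕ) + 2 ≤ n then -a (n + b - 1 - (i : ℕ))
    else 0

/-- The matrix `W` (0-based translation): `W_{0,0} = -a_{n-1}`, `W_{0,n-1} = -a_0`,
`W_{i,i-1} = 1` for `1 ≤ i ≤ n-1`, `W_{i,0} = a_{i-1}/a_0` for `2 ≤ i ≤ n-1`;
all other entries `0`. -/
def Wmat (n : ℕ) (a : ℕ → ℂ) : Matrix (Fin n) (Fin n) ℂ :=
  Matrix.of fun i j =>
    if (i : ℕ) = 0 ∧ (j : ℕ) = 0 then -a (n - 1)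
    else if (i : ℕ) = 0 ∧ (j : ℕ) = n - 1 then -a 0
    else if (i : ℕ) = (j : ℕ) + 1 then 1
    else if 2 ≤ (i : ℕ) ∧ (j : ℕ) = 0 then a ((i : ℕ) - 1) / a 0
    else 0

/-- The matrix `X_b` (0-based translation): `(X_b)_{0,j} = -a_{n-1-j}` for
`0 ≤ j ≤ n-2-b`, `(X_b)_{0,n-1} = -a_0`, `(X_b)_{i,i-1} = 1` for `1 ≤ i ≤ n-2`,
`(X_b)_{n-1,n-2} = 1`, `(X_b)_{n-1,j} = a_{n-2-j}/a_0` for `n-2-b ≤ j ≤ n-3`;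
all other entries `0`. -/
def Xmat (n b : ℕ) (a : ℕ → ℂ) : Matrix (Fin n) (Fin n) ℂ :=
  Matrix.of fun i j =>
    if (i : ℕ) = 0 ∧ (j : ℕ) + b ≤ n - 2 then -a (n - 1 - (j : ℕ))
    else if (i : ℕ) = 0 ∧ (j : ℕ) = n - 1 then -a 0
    else if (i : ℕ) = (j : ℕ) + 1 ∧ (i : ℕ) + 2 ≤ n then 1
    else if (i : ℕ) = n - 1 ∧ (j : ℕ) = n - 2 then 1
    else if (i : ℕ) = n - 1 ∧ n - 2 ≤ (j : ℕ) + b ∧ (j : ℕ) + 3 ≤ n then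
      a (n - 2 - (j : ℕ)) / a 0
    else 0

/-- A matrix `E` of type `E_c(q)` for the monic polynomial with coefficients `b`
(0-based translation of the 1-based description): superdiagonal `1`'s,
`E_{n-1,0} = -b_0`, and positions `(r k, col k)` for `k = 0, …, n-2` with
`r k = col k + k`, `c ≤ r k`, `1 ≤ col k ≤ c`, holding `-b_{n-1-k}`; all other
entries `0`. -/
def IsTypeE (n c : ℕ) (b : ℕ → ℂ) (E : Matrix (Fin n) (Fin n) ℂ) : Prop :=
  ∃ r col : ℕ → Fin n,
    (∀ k : ℕ, k ≤ n - 2 → (r k : ℕ) = (col k : ℕ) + k) ∧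
    (∀ k : ℕ, k ≤ n - 2 → c ≤ (r k : ℕ)) ∧
    (∀ k : ℕ, k ≤ n - 2 → 1 ≤ (col k : ℕ) ∧ (col k : ℕ) ≤ c) ∧
    (∀ k : ℕ, k ≤ n - 2 → E (r k) (col k) = -b (n - 1 - k)) ∧
    (∀ i j : Fin n, (j : ℕ) = (i : ℕ) + 1 → E i j = 1) ∧
    (∀ i j : Fin n, (i : ℕ) = n - 1 → (j : ℕ) = 0 → E i j = -b 0) ∧
    (∀ i j : Fin n, (j : ℕ) ≠ (i : ℕ) + 1 → ¬((i : ℕ) = n - 1 ∧ (j : ℕ) = 0) →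
      (∀ k : ℕ, k ≤ n - 2 → ¬(r k = i ∧ col k = j)) → E i j = 0)

/-- `A` is of type `E_c(p♯)⁻¹`: `A = E⁻¹` for some `E` of type `E_c(p♯)`. -/
def IsTypeEInv (n c : ℕ) (a : ℕ → ℂ) (A : Matrix (Fin n) (Fin n) ℂ) : Prop :=
  ∃ E : Matrix (Fin n) (Fin n) ℂ, IsTypeE n c (asharp n a) E ∧ A = E⁻¹

/-!
A coefficient of `C` at `(r k, c k)` shares its row with a superdiagonal `1` unless it lies in the
last row, and its column with a superdiagonal `1` unless it lies in the first column. Hence a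
coefficient of maximal modulus `M` outside the last row forces `‖C‖_∞ ≥ 1 + M`, and one outside
the first column forces `‖C‖_1 ≥ 1 + M`. Both norms of `C` are at least `|a_0|`, while the column
sums of `F` are `|a_0|` and `1 + |a_j|`, so `N(F) ≤ max (|a_0|, 1 + M)`. If `‖C‖_∞ < N(F)`, every
maximal coefficient therefore lies in the last row; there it sits in column `i ≥ 1`, which gives
`N(F) ≤ ‖C‖_1`. The case `‖C‖_1 < N(F)` is symmetric.
-/

section MatrixNorms

variable {n : ℕ} (A : Matrix (Fin n) (Fin n) ℂ)

theorem sum_norm_row_le_infNorm (i : Fin n) : ∑ j, ‖A i j‖ ≤ infNorm A :=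
  le_ciSup (f := fun i => ∑ j, ‖A i j‖) (Finite.bddAbove_range _) i

theorem sum_norm_col_le_oneNorm (j : Fin n) : ∑ i, ‖A i j‖ ≤ oneNorm A :=
  le_ciSup (f := fun j => ∑ i, ‖A i j‖) (Finite.bddAbove_range _) j

theorem norm_le_infNorm (i j : Fin n) : ‖A i j‖ ≤ infNorm A :=
  (Finset.single_le_sum (fun _ _ => norm_nonneg _) (Finset.mem_univ j)).trans
    (sum_norm_row_le_infNorm A i)

theorem norm_le_oneNorm (i j : Fin n) : ‖A i j‖ ≤ oneNorm A :=
  (Finset.single_le_sum (f := fun i => ‖A i j‖) (fun _ _ => norm_nonneg _) (Finset.mem_univ i)).trans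
    (sum_norm_col_le_oneNorm A j)

theorem norm_add_norm_le_infNorm {i j j' : Fin n} (h : j ≠ j') :
    ‖A i j‖ + ‖A i j'‖ ≤ infNorm A :=
  (Finset.add_le_sum (fun _ _ => norm_nonneg _) (Finset.mem_univ _) (Finset.mem_univ _) h).trans
    (sum_norm_row_le_infNorm A i)

theorem norm_add_norm_le_oneNorm {i i' j : Fin n} (h : i ≠ i') :
    ‖A i j‖ + ‖A i' j‖ ≤ oneNorm A :=
  (Finset.add_le_sum (fun _ _ => norm_nonneg _) (Finset.mem_univ _) (Finset.mem_univ _) h).trans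
    (sum_norm_col_le_oneNorm A j)

end MatrixNorms

section Frobenius

variable {n : ℕ} (a : ℕ → ℂ)

theorem sum_norm_Frob_col_zero (j : Fin n) (hj : (j : ℕ) = 0) :
    ∑ i, ‖Frob n a i j‖ = ‖a 0‖ := by
  rw [Fintype.sum_eq_single ⟨n - 1, by omega⟩ fun i hi => ?_]
  · simp [Frob, hj]
  · have hi' : (i : ℕ) ≠ n - 1 := fun h => hi (Fin.ext h)
    simp [Frob, hj, hi']

theorem sum_norm_Frob_col_of_ne_zero (j : Fin n) (hj : (j : ℕ) ≠ 0) :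
    ∑ i, ‖Frob n a i j‖ = 1 + ‖a j‖ := by
  rw [Fintype.sum_eq_add ⟨j - 1, by omega⟩ ⟨n - 1, by omega⟩ (Fin.ne_of_val_ne (show (j : ℕ) - 1 ≠ n - 1 by omega))
    fun i hi => ?_]
  · have h₁ : (j : ℕ) = j - 1 + 1 := by omega
    have h₂ : (j : ℕ) ≠ n - 1 + 1 := by omega
    simp [Frob, ← h₁, h₂]
  · have h₁ : (j : ℕ) ≠ i + 1 := fun h => hi.1 (Fin.ext (show (i : ℕ) = j - 1 by omega))
    have h₂ : (i : ℕ) ≠ n - 1 := fun h => hi.2 (Fin.ext h)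
    simp [Frob, h₁, h₂]

theorem NN_Frob_le {M : ℝ} (hM : M ∈ upperBounds ((fun k => ‖a k‖) '' Set.Icc 1 (n - 1))) :
    NN (Frob n a) ≤ max ‖a 0‖ (1 + M) := by
  refine (min_le_right _ _).trans <| Real.iSup_le (fun j => ?_) (le_max_of_le_left (norm_nonneg _))
  by_cases hj : (j : ℕ) = 0
  · rw [sum_norm_Frob_col_zero a j hj]
    exact le_max_left _ _
  · rw [sum_norm_Frob_col_of_ne_zero a j hj]
    have : ‖a j‖ ≤ M := hM ⟨j, ⟨by omega, by omega⟩, rfl⟩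
    exact le_max_of_le_right (by linarith)

end Frobenius

namespace IsUnitSparseData

variable {n m : ℕ} {a : ℕ → ℂ} {C : Matrix (Fin n) (Fin n) ℂ} {r c : Fin n → Fin n}

theorem row_eq (hC : IsUnitSparseData n m a C r c) (k : Fin n) : (r k : ℕ) = c k + k :=
  hC.2.1 k

theorem apply_coeff (hC : IsUnitSparseData n m a C r c) (k : Fin n) :
    C (r k) (c k) = -a (n - 1 - k) :=
  hC.2.2.2.2.1 k

theorem apply_superdiag (hC : IsUnitSparseData n m a C r c) {i j : Fin n}
    (h : (j : ℕ) = i + 1) : C i j = 1 :=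
  hC.2.2.2.2.2.1 i j h

theorem norm_coeff_le_infNorm (hC : IsUnitSparseData n m a C r c) (k : Fin n) :
    ‖a (n - 1 - k)‖ ≤ infNorm C := by
  simpa [hC.apply_coeff k] using norm_le_infNorm C (r k) (c k)

theorem norm_coeff_le_oneNorm (hC : IsUnitSparseData n m a C r c) (k : Fin n) :
    ‖a (n - 1 - k)‖ ≤ oneNorm C := by
  simpa [hC.apply_coeff k] using norm_le_oneNorm C (r k) (c k)

theorem one_add_norm_coeff_le_infNorm (hC : IsUnitSparseData n m a C r c) (k : Fin n)
    (hk : (r k : ℕ) + 1 < n) : 1 + ‖a (n - 1 - k)‖ ≤ infNorm C := by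
  have hne : (⟨r k + 1, hk⟩ : Fin n) ≠ c k := by
    have := hC.row_eq k
    simp only [ne_eq, Fin.ext_iff]
    omega
  have hone : C (r k) ⟨r k + 1, hk⟩ = 1 := hC.apply_superdiag rfl
  simpa [hone, hC.apply_coeff k] using norm_add_norm_le_infNorm C (i := r k) hne

theorem one_add_norm_coeff_le_oneNorm (hC : IsUnitSparseData n m a C r c) (k : Fin n)
    (hk : (c k : ℕ) ≠ 0) : 1 + ‖a (n - 1 - k)‖ ≤ oneNorm C := by
  set i : Fin n := ⟨c k - 1, by omega⟩
  have hne : i ≠ r k := by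
    have := hC.row_eq k
    simp only [i, ne_eq, Fin.ext_iff]
    omega
  have hone : C i (c k) = 1 := hC.apply_superdiag (show (c k : ℕ) = c k - 1 + 1 by omega)
  simpa [hone, hC.apply_coeff k] using norm_add_norm_le_oneNorm C (j := c k) hne

variable {M : ℝ}

theorem NN_Frob_le_infNorm (hC : IsUnitSparseData n m a C r c)
    (hM : M ∈ upperBounds ((fun k => ‖a k‖) '' Set.Icc 1 (n - 1))) (k : Fin n)
    (hk : (r k : ℕ) + 1 < n) (hkM : ‖a (n - 1 - k)‖ = M) : NN (Frob n a) ≤ infNorm C := by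
  have h₀ : ‖a 0‖ ≤ infNorm C := by simpa using hC.norm_coeff_le_infNorm ⟨n - 1, by omega⟩
  exact (NN_Frob_le a hM).trans (max_le h₀ (hkM ▸ hC.one_add_norm_coeff_le_infNorm k hk))

theorem NN_Frob_le_oneNorm (hC : IsUnitSparseData n m a C r c)
    (hM : M ∈ upperBounds ((fun k => ‖a k‖) '' Set.Icc 1 (n - 1))) (k : Fin n)
    (hk : (c k : ℕ) ≠ 0) (hkM : ‖a (n - 1 - k)‖ = M) : NN (Frob n a) ≤ oneNorm C := by
  have h₀ : ‖a 0‖ ≤ oneNorm C := by simpa using hC.norm_coeff_le_oneNorm ⟨n - 1, by omega⟩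
  exact (NN_Frob_le a hM).trans (max_le h₀ (hkM ▸ hC.one_add_norm_coeff_le_oneNorm k hk))

theorem maxCoeffs_lastRow_of_infNorm_lt (hC : IsUnitSparseData n m a C r c)
    (hM : IsGreatest ((fun k => ‖a k‖) '' Set.Icc 1 (n - 1)) M)
    (hlt : infNorm C < NN (Frob n a)) :
    (∀ i : ℕ, 1 ≤ i → i ≤ n - 1 → ‖a i‖ = M →
        ∀ k : Fin n, (k : ℕ) = n - 1 - i → (r k : ℕ) = n - 1) ∧
      NN (Frob n a) ≤ oneNorm C := by
  have hrow : ∀ i : ℕ, 1 ≤ i → i ≤ n - 1 → ‖a i‖ = M →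
      ∀ k : Fin n, (k : ℕ) = n - 1 - i → (r k : ℕ) = n - 1 := by
    intro i _ hin hi k hk
    by_contra hr
    have hkM : ‖a (n - 1 - k)‖ = M := by rwa [show n - 1 - (k : ℕ) = i by omega]
    exact hlt.not_ge (hC.NN_Frob_le_infNorm hM.2 k (by have := (r k).isLt; omega) hkM)
  refine ⟨hrow, ?_⟩
  obtain ⟨i, ⟨hi₁, hin⟩, hi⟩ := hM.1
  have hr := hrow i hi₁ hin hi ⟨n - 1 - i, by omega⟩ rfl
  have hc := hC.row_eq ⟨n - 1 - i, by omega⟩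
  refine hC.NN_Frob_le_oneNorm hM.2 ⟨n - 1 - i, by omega⟩ (by simp only at hc; omega) ?_
  rwa [show n - 1 - (n - 1 - i) = i by omega]

theorem maxCoeffs_firstCol_of_oneNorm_lt (hC : IsUnitSparseData n m a C r c)
    (hM : IsGreatest ((fun k => ‖a k‖) '' Set.Icc 1 (n - 1)) M)
    (hlt : oneNorm C < NN (Frob n a)) :
    (∀ i : ℕ, 1 ≤ i → i ≤ n - 1 → ‖a i‖ = M →
        ∀ k : Fin n, (k : ℕ) = n - 1 - i → (c k : ℕ) = 0) ∧
      NN (Frob n a) ≤ infNorm C := by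
  have hcol : ∀ i : ℕ, 1 ≤ i → i ≤ n - 1 → ‖a i‖ = M →
      ∀ k : Fin n, (k : ℕ) = n - 1 - i → (c k : ℕ) = 0 := by
    intro i _ hin hi k hk
    by_contra hc
    have hkM : ‖a (n - 1 - k)‖ = M := by rwa [show n - 1 - (k : ℕ) = i by omega]
    exact hlt.not_ge (hC.NN_Frob_le_oneNorm hM.2 k hc hkM)
  refine ⟨hcol, ?_⟩
  obtain ⟨i, ⟨hi₁, hin⟩, hi⟩ := hM.1
  have hc := hcol i hi₁ hin hi ⟨n - 1 - i, by omega⟩ rfl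
  have hr := hC.row_eq ⟨n - 1 - i, by omega⟩
  refine hC.NN_Frob_le_infNorm hM.2 ⟨n - 1 - i, by omega⟩ (by simp only at hr; omega) ?_
  rwa [show n - 1 - (n - 1 - i) = i by omega]

end IsUnitSparseData

theorem stmt3_general (n m : ℕ) (a : ℕ → ℂ) (C : Matrix (Fin n) (Fin n) ℂ)
    (r c : Fin n → Fin n) (hC : IsUnitSparseData n m a C r c)
    (M : ℝ) (hM : IsGreatest ((fun k => ‖a k‖) '' (Set.Icc 1 (n - 1))) M)
    (hlt : NN C < NN (Frob n a)) :
    ((∀ i : ℕ, 1 ≤ i → i ≤ n - 1 → ‖a i‖ = M →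
        ∀ k : Fin n, (k : ℕ) = n - 1 - i → (r k : ℕ) = n - 1) ∧
      infNorm C < NN (Frob n a) ∧ NN (Frob n a) ≤ oneNorm C) ∨
    ((∀ i : ℕ, 1 ≤ i → i ≤ n - 1 → ‖a i‖ = M →
        ∀ k : Fin n, (k : ℕ) = n - 1 - i → (c k : ℕ) = 0) ∧
      oneNorm C < NN (Frob n a) ∧ NN (Frob n a) ≤ infNorm C) := by
  by_cases hinf : infNorm C < NN (Frob n a)
  · obtain ⟨hrow, hone⟩ := hC.maxCoeffs_lastRow_of_infNorm_lt hM hinf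
    exact Or.inl ⟨hrow, hinf, hone⟩
  · have hone : oneNorm C < NN (Frob n a) := (min_lt_iff.1 hlt).resolve_left hinf
    obtain ⟨hcol, hinf'⟩ := hC.maxCoeffs_firstCol_of_oneNorm_lt hM hone
    exact Or.inr ⟨hcol, hone, hinf'⟩

/-- if `N(C) < N(F)` then either all coefficients of maximal modulus
`M` (among `a_1, …, a_{n-1}`) lie in the last row of `C` and
`‖C‖_∞ < N(F) ≤ ‖C‖_1`, or they all lie in the first column and
`‖C‖_1 < N(F) ≤ ‖C‖_∞`.  (The coefficient `-a_i` sits at position index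
`k = n-1-i`.) -/
theorem stmt3 (n m : ℕ) (hn : 2 ≤ n) (a : ℕ → ℂ) (C : Matrix (Fin n) (Fin n) ℂ)
    (r c : Fin n → Fin n) (hC : IsUnitSparseData n m a C r c)
    (M : ℝ) (hM : IsGreatest ((fun k => ‖a k‖) '' (Set.Icc 1 (n - 1))) M)
    (hlt : NN C < NN (Frob n a)) :
    ((∀ i : ℕ, 1 ≤ i → i ≤ n - 1 → ‖a i‖ = M →
        ∀ k : Fin n, (k : ℕ) = n - 1 - i → (r k : ℕ) = n - 1) ∧
      infNorm C < NN (Frob n a) ∧ NN (Frob n a) ≤ oneNorm C) ∨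
    ((∀ i : ℕ, 1 ≤ i → i ≤ n - 1 → ‖a i‖ = M →
        ∀ k : Fin n, (k : ℕ) = n - 1 - i → (c k : ℕ) = 0) ∧
      oneNorm C < NN (Frob n a) ∧ NN (Frob n a) ≤ infNorm C) :=
  stmt3_general n m a C r c hC M hM hlt

end
end

section
/- Let b ∈ {0, 1, …, n−2} and let F_b be any Fiedler companion matrix of p in Hessenberg form in which the coefficient −a_b lies in row n and the coefficient −a_{b+1} lies in row n−1. Then ‖L_b‖_∞ ≤ ‖F_b‖_∞. -/
/-!
The coefficients of a Fiedler matrix in Hessenberg form descend a staircase: passing from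
`-a_{n-1-k}` to `-a_{n-2-k}` either moves one row down or one column left, so the row of
`-a_{n-1-k}` is monotone in `k`. Since `-a_b` already lies in the last row, so do
`-a_{b-1}, …, -a_0`, at columns `b-1, …, 0`, and the last row of `F_b` dominates that of `L_b`
entrywise. Since `-a_{b+1}` lies in the second-to-last row, all of
`-a_{b+1}, …, -a_{n-1}` lie in that row or above it, each sharing its row with a superdiagonal `1`; that row of `F_b`
dominates the row of `L_b` holding the same coefficient. Every other row `i` of `L_b` holds only
its superdiagonal `1`, which row `i` of `F_b` also holds.
-/

noncomputable section

open Finset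

lemma sum_norm_le_infNorm {n : ℕ} (A : Matrix (Fin n) (Fin n) ℂ) (i : Fin n) :
    ∑ j, ‖A i j‖ ≤ infNorm A :=
  le_ciSup (f := fun i => ∑ j, ‖A i j‖) (Set.finite_range _).bddAbove i

lemma infNorm_le_of_forall_exists_sum_norm_le {n : ℕ} {A B : Matrix (Fin n) (Fin n) ℂ}
    (h : ∀ i, ∃ i', ∑ j, ‖A i j‖ ≤ ∑ j, ‖B i' j‖) : infNorm A ≤ infNorm B :=
  Real.iSup_le (fun i => (h i).elim fun i' hi' => hi'.trans (sum_norm_le_infNorm B i'))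
    (Real.iSup_nonneg fun _ => sum_nonneg fun _ _ => norm_nonneg _)

namespace IsUnitSparseData

variable {n m : ℕ} {a : ℕ → ℂ} {C : Matrix (Fin n) (Fin n) ℂ} {r c : Fin n → Fin n}

lemma val_row (h : IsUnitSparseData n m a C r c) (k : Fin n) : (r k : ℕ) = c k + k :=
  h.2.1 k

lemma apply_row_col (h : IsUnitSparseData n m a C r c) (k : Fin n) :
    C (r k) (c k) = -a (n - 1 - k) :=
  h.2.2.2.2.1 k

lemma apply_of_val_eq_succ (h : IsUnitSparseData n m a C r c) {i j : Fin n}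
    (hj : (j : ℕ) = i + 1) : C i j = 1 :=
  h.2.2.2.2.2.1 i j hj

lemma one_le_sum_norm (h : IsUnitSparseData n m a C r c) (i : Fin n) (hi : (i : ℕ) + 1 < n) :
    1 ≤ ∑ j, ‖C i j‖ :=
  calc (1 : ℝ) = ‖C i ⟨i + 1, hi⟩‖ := by rw [h.apply_of_val_eq_succ rfl, norm_one]
    _ ≤ ∑ j, ‖C i j‖ := single_le_sum (f := fun j => ‖C i j‖) (fun _ _ => norm_nonneg _)
        (mem_univ _)

lemma one_add_norm_le_sum_norm (h : IsUnitSparseData n m a C r c) (k : Fin n)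
    (hk : (r k : ℕ) + 1 < n) : 1 + ‖a (n - 1 - k)‖ ≤ ∑ j, ‖C (r k) j‖ := by
  have hne : (⟨r k + 1, hk⟩ : Fin n) ≠ c k := by
    have := h.val_row k
    exact Fin.ne_of_val_ne (by simp only; omega)
  calc 1 + ‖a (n - 1 - k)‖ = ‖C (r k) ⟨r k + 1, hk⟩‖ + ‖C (r k) (c k)‖ := by
        rw [h.apply_of_val_eq_succ rfl, h.apply_row_col k, norm_one, norm_neg]
    _ ≤ ∑ j, ‖C (r k) j‖ :=
        add_le_sum (f := fun j => ‖C (r k) j‖) (fun _ _ => norm_nonneg _) (mem_univ _)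
          (mem_univ _) hne

end IsUnitSparseData

namespace IsFiedlerData

variable {n m : ℕ} {a : ℕ → ℂ} {C : Matrix (Fin n) (Fin n) ℂ} {r c : Fin n → Fin n}

lemma row_le_row_of_val_eq_succ (h : IsFiedlerData n m a C r c) {k k' : Fin n}
    (hk : (k' : ℕ) = k + 1) : r k ≤ r k' := by
  rcases h.2 k k' hk with ⟨hr, -⟩ | ⟨hr, -⟩
  · exact Fin.le_iff_val_le_val.2 (by omega)
  · exact hr.le

lemma row_monotone (h : IsFiedlerData n m a C r c) : Monotone r := by
  cases n with
  | zero => exact fun k => k.elim0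
  | succ n => exact Fin.monotone_iff_le_succ.2 fun k => h.row_le_row_of_val_eq_succ (by simp)

lemma apply_last_row (h : IsFiedlerData n m a C r c) {k₀ : Fin n} (h₀ : (r k₀ : ℕ) = n - 1)
    {i j : Fin n} (hi : (i : ℕ) = n - 1) (hj : (j : ℕ) + k₀ ≤ n - 1) : C i j = -a j := by
  obtain ⟨k, hk⟩ : ∃ k : Fin n, (k : ℕ) = n - 1 - j := ⟨⟨n - 1 - j, by omega⟩, rfl⟩
  have hrk : r k = i := by
    have hk₀k : k₀ ≤ k := Fin.le_iff_val_le_val.2 (by omega)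
    have := Fin.le_iff_val_le_val.1 (h.row_monotone hk₀k)
    have := (r k).isLt
    exact Fin.ext (by omega)
  have hck : c k = j := by
    have := h.1.val_row k
    exact Fin.ext (by rw [hrk] at this; omega)
  rw [← hrk, ← hck, h.1.apply_row_col k, hk]
  congr 2
  omega

end IsFiedlerData

section Lmat

variable {n b : ℕ} (a : ℕ → ℂ) {i j : Fin n}

lemma Lmat_apply_of_val_eq_succ (hj : (j : ℕ) = i + 1) : Lmat n b a i j = 1 := by
  simp [Lmat, hj]

lemma Lmat_apply_of_val_eq_of_le (hi : (i : ℕ) + 1 < n) (hbi : b ≤ (i : ℕ))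
    (hj : (j : ℕ) = b) :
    Lmat n b a i j = -a (n + b - 1 - i) := by
  simp only [Lmat, Matrix.of_apply]
  split_ifs <;> first | rfl | omega

lemma Lmat_apply_of_val_eq_last (hi : (i : ℕ) = n - 1) :
    Lmat n b a i j = if (j : ℕ) ≤ b then -a j else 0 := by
  simp only [Lmat, Matrix.of_apply]
  split_ifs <;> first | rfl | omega

lemma sum_norm_Lmat_of_lt (hi : (i : ℕ) + 1 < n) (hib : (i : ℕ) < b) :
    ∑ j, ‖Lmat n b a i j‖ = 1 := by
  rw [Fintype.sum_eq_single ⟨i + 1, hi⟩ fun j hj => ?_]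
  · rw [Lmat_apply_of_val_eq_succ a rfl, norm_one]
  · have hj : (j : ℕ) ≠ i + 1 := fun h => hj (Fin.ext h)
    simp only [Lmat, Matrix.of_apply]
    split_ifs <;> first | omega | simp

lemma sum_norm_Lmat_of_le (hi : (i : ℕ) + 1 < n) (hbi : b ≤ (i : ℕ)) :
    ∑ j, ‖Lmat n b a i j‖ = 1 + ‖a (n + b - 1 - i)‖ := by
  rw [Fintype.sum_eq_add ⟨i + 1, hi⟩ ⟨b, by omega⟩ (Fin.ne_of_val_ne (by simp only; omega))
    fun j hj => ?_]
  · rw [Lmat_apply_of_val_eq_succ a rfl, Lmat_apply_of_val_eq_of_le a hi hbi rfl, norm_one,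
      norm_neg]
  · have hj₁ : (j : ℕ) ≠ i + 1 := fun h => hj.1 (Fin.ext h)
    have hj₂ : (j : ℕ) ≠ b := fun h => hj.2 (Fin.ext h)
    simp only [Lmat, Matrix.of_apply]
    split_ifs <;> first | omega | simp

end Lmat

theorem stmt6_general (n b : ℕ) (a : ℕ → ℂ)
    (Fb : Matrix (Fin n) (Fin n) ℂ) (m : ℕ) (r c : Fin n → Fin n)
    (hF : IsFiedlerData n m a Fb r c)
    (hrow : ∀ k : Fin n, (k : ℕ) = n - 1 - b → (r k : ℕ) = n - 1)
    (hrow' : ∀ k : Fin n, (k : ℕ) = n - 2 - b → (r k : ℕ) = n - 2) :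
    infNorm (Lmat n b a) ≤ infNorm Fb := by
  refine infNorm_le_of_forall_exists_sum_norm_le fun i => ?_
  by_cases hlast : (i : ℕ) = n - 1
  · refine ⟨i, sum_le_sum fun j _ => ?_⟩
    rw [Lmat_apply_of_val_eq_last a hlast]
    split_ifs with hj
    · rw [hF.apply_last_row (hrow ⟨n - 1 - b, by omega⟩ rfl) hlast (by simp only; omega)]
    · simp
  have hi : (i : ℕ) + 1 < n := by omega
  by_cases hbi : b ≤ (i : ℕ)
  · obtain ⟨k, hk⟩ : ∃ k : Fin n, (k : ℕ) = i - b := ⟨⟨i - b, by omega⟩, rfl⟩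
    have hrk : (r k : ℕ) + 1 < n := by
      have := Fin.le_iff_val_le_val.1 (hF.row_monotone
        (show k ≤ ⟨n - 2 - b, by omega⟩ from Fin.le_iff_val_le_val.2 (by simp only; omega)))
      rw [hrow' ⟨n - 2 - b, by omega⟩ rfl] at this
      omega
    refine ⟨r k, ?_⟩
    rw [sum_norm_Lmat_of_le a hi hbi, show n + b - 1 - i = n - 1 - k by omega]
    exact hF.1.one_add_norm_le_sum_norm k hrk
  · exact ⟨i, (sum_norm_Lmat_of_lt a hi (by omega)).trans_le (hF.1.one_le_sum_norm i hi)⟩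

/-- if `F_b` is a Fiedler companion matrix of `p` in Hessenberg form
in which `-a_b` lies in row `n` (position index `n-1-b`) and `-a_{b+1}` lies in row
`n-1` (position index `n-2-b`), then `‖L_b‖_∞ ≤ ‖F_b‖_∞`. -/
theorem stmt6 (n b : ℕ) (hn : 2 ≤ n) (hb : b ≤ n - 2) (a : ℕ → ℂ)
    (Fb : Matrix (Fin n) (Fin n) ℂ) (m : ℕ) (r c : Fin n → Fin n)
    (hF : IsFiedlerData n m a Fb r c)
    (hrow : ∀ k : Fin n, (k : ℕ) = n - 1 - b → (r k : ℕ) = n - 1)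
    (hrow' : ∀ k : Fin n, (k : ℕ) = n - 2 - b → (r k : ℕ) = n - 2) :
    infNorm (Lmat n b a) ≤ infNorm Fb :=
  stmt6_general n b a Fb m r c hF hrow hrow'

end
end
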